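/- arXiv:1902.05701 — 2 statements merged into one kernel-verified Lean document; each statement's English description precedes it below -/
import Mathlib

section
/- Let G be a 2-connected graph that is not a cycle. Then G contains an induced cycle C with at least one bridge. -/
/-!
Take a shortest cycle `C` of `G`; one exists because every vertex of a 2-connected graph has two
neighbours, so `G` is not a tree. A chord of `C` would close a strictly shorter cycle, so `C` is
induced. If `C` passed through every vertex, the copy of the cycle graph `C_n` traced by `C` would
be a bijection on vertices, and `G` would have at most `n` edges (all of them on `C`), i.e. no more
than `C_n`; so `G ≅ C_n`. Hence some vertex lies outside `C`, and its component of `G − V(C)`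
yields a bridge.
-/

/-- A graph is 2-connected if it has at least 3 vertices and remains connected
after deleting any single vertex. -/
def TwoConnected {V : Type*} [Fintype V] (G : SimpleGraph V) : Prop :=
  3 ≤ Fintype.card V ∧ ∀ v : V, (G.induce {u | u ≠ v}).Connected

namespace SimpleGraph

variable {V : Type*} {G : SimpleGraph V}

namespace Walk

theorem IsPath.exists_isCycle_length_le_of_adj {u v b : V} {p : G.Walk u v} (hp : p.IsPath)
    (hb : b ∈ p.support) (hbv : b ≠ v) (hadj : G.Adj b u) (hub : s(u, b) ∉ p.edges) :
    ∃ c : G.Walk b b, c.IsCycle ∧ c.length ≤ p.length := by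
  classical
  refine ⟨cons hadj (p.takeUntil b hb), ?_, ?_⟩
  · rw [cons_isCycle_iff]
    refine ⟨hp.takeUntil hb, fun h => hub ?_⟩
    rw [Sym2.eq_swap]
    exact p.edges_takeUntil_subset_edges hb h
  · have hdrop : ¬ (p.dropUntil b hb).Nil := fun h => hbv h.eq
    have := congrArg length (p.take_spec hb)
    rw [length_append] at this
    have := not_nil_iff_lt_length.mp hdrop
    simp only [length_cons]
    omega

theorem IsCycle.exists_length_lt_of_isChord {x a b : V} {c : G.Walk x x}
    (hc : c.IsCycle) (hch : c.IsChord s(a, b)) :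
    ∃ (y : V) (d : G.Walk y y), d.IsCycle ∧ d.length < c.length := by
  classical
  -- Rotated to start at `a`, the cycle is `a → u ⇝ a` along a path `q`; following `q` backwards
  -- from `a` to `b` and closing up with the chord skips at least the edge `au`.
  obtain ⟨hab, hnot, ha, hb⟩ := isChord_sym2Mk.mp hch
  have hrot := (isCycle_rotate ha).mpr hc
  have hedges (e : Sym2 V) : e ∈ (c.rotate a ha).edges ↔ e ∈ c.edges :=
    (rotate_edges c a ha).mem_iff
  obtain ⟨u, hau, q, hq⟩ := not_nil_iff.mp hrot.not_nil
  have hlen : c.length = q.length + 1 := by rw [← length_rotate c a ha, hq, length_cons]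
  rw [hq, cons_isCycle_iff] at hrot
  have hbq : b ∈ q.reverse.support := by
    have := (mem_support_rotate_iff c a ha).mpr hb
    rw [hq, support_cons, List.mem_cons] at this
    rw [support_reverse, List.mem_reverse]
    exact this.resolve_left hab.ne'
  have hbu : b ≠ u := by
    rintro rfl
    exact hnot ((hedges _).mp (hq ▸ by simp))
  have hab' : s(a, b) ∉ q.reverse.edges := fun h =>
    hnot ((hedges _).mp (hq ▸ by simp [edges_reverse] at h ⊢; exact Or.inr h))
  obtain ⟨d, hd, hdlen⟩ := hrot.1.reverse.exists_isCycle_length_le_of_adj hbq hbu hab.symm hab'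
  exact ⟨b, d, hd, by rw [hlen, ← length_reverse q]; omega⟩

theorem IsCycle.isChordless_of_forall_length_le {x : V} {c : G.Walk x x} (hc : c.IsCycle)
    (hmin : ∀ (y : V) (d : G.Walk y y), d.IsCycle → c.length ≤ d.length) : c.IsChordless := by
  intro e hch
  induction e using Sym2.ind
  obtain ⟨y, d, hd, hlt⟩ := hc.exists_length_lt_of_isChord hch
  exact (hmin y d hd).not_gt hlt

theorem natCard_le_length_of_forall_mem_support {x : V} {c : G.Walk x x} (hc : ¬ c.Nil)
    (hspan : ∀ v, v ∈ c.support) : Nat.card V ≤ c.length := by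
  classical
  have hcover : Set.univ ⊆ (c.support.tail.toFinset : Set V) := by
    intro v _
    have hv := hspan v
    rw [← cons_tail_support, List.mem_cons] at hv
    rcases hv with rfl | hv
    · simpa using end_mem_tail_support hc
    · simpa using hv
  calc Nat.card V = (Set.univ : Set V).ncard := (Set.ncard_univ V).symm
    _ ≤ c.support.tail.toFinset.card :=
      (Set.ncard_le_ncard hcover (Finset.finite_toSet _)).trans_eq (Set.ncard_coe_finset _)
    _ ≤ c.support.tail.length := List.toFinset_card_le _
    _ = c.length := by simp [length_support]

theorem IsChordless.natCard_edgeSet_le {x : V} {c : G.Walk x x} (hch : c.IsChordless)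
    (hspan : ∀ v, v ∈ c.support) : Nat.card G.edgeSet ≤ c.length := by
  classical
  have hcover : G.edgeSet ⊆ (c.edges.toFinset : Set (Sym2 V)) := by
    intro e he
    induction e using Sym2.ind
    simpa using hch.mem_edges (hspan _) (hspan _) he
  calc Nat.card G.edgeSet = G.edgeSet.ncard := Nat.card_coe_set_eq _
    _ ≤ c.edges.toFinset.card :=
      (Set.ncard_le_ncard hcover (Finset.finite_toSet _)).trans_eq (Set.ncard_coe_finset _)
    _ ≤ c.edges.length := List.toFinset_card_le _
    _ = c.length := length_edges c

end Walk

theorem natCard_edgeSet_cycleGraph {n : ℕ} (hn : 3 ≤ n) : Nat.card (cycleGraph n).edgeSet = n := by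
  obtain ⟨m, rfl⟩ := Nat.exists_eq_add_of_le' hn
  have hsum := (cycleGraph (m + 3)).sum_degrees_eq_twice_card_edges
  simp only [cycleGraph_degree_three_le, Finset.sum_const, Finset.card_univ, Fintype.card_fin,
    smul_eq_mul] at hsum
  rw [Nat.card_eq_fintype_card, ← edgeFinset_card]
  omega

namespace Copy

variable {α β : Type*} {A : SimpleGraph α} {B : SimpleGraph β}

noncomputable def isoOfNatCardLE [Finite β] [Finite B.edgeSet] (f : Copy A B)
    (hV : Nat.card β ≤ Nat.card α) (hE : Nat.card B.edgeSet ≤ Nat.card A.edgeSet) : A ≃g B where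
  toEquiv := Equiv.ofBijective f (f.injective.bijective_of_nat_card_le hV)
  map_rel_iff' {a b} := by
    refine ⟨fun h => ?_, f.toHom.map_adj⟩
    obtain ⟨⟨e, he⟩, hfe⟩ := (f.mapEdgeSet.injective.bijective_of_nat_card_le hE).2 ⟨s(f a, f b), h⟩
    have hmap : Sym2.map f e = Sym2.map f s(a, b) := congrArg Subtype.val hfe
    rwa [Sym2.map.injective f.injective hmap] at he

end Copy

theorem exists_isCycle_isChordless (h : ¬ G.IsAcyclic) :
    ∃ (x : V) (c : G.Walk x x), c.IsCycle ∧ c.IsChordless := by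
  obtain ⟨x, c, hc, hgirth⟩ := exists_girth_eq_length.mpr h
  exact ⟨x, c, hc, hc.isChordless_of_forall_length_le fun _ _ hd => hgirth ▸ girth_le_length hd⟩

theorem Walk.IsCycle.nonempty_iso_cycleGraph [Finite V] {x : V} {c : G.Walk x x}
    (hc : c.IsCycle) (hch : c.IsChordless) (hspan : ∀ v, v ∈ c.support) :
    Nonempty (G ≃g cycleGraph c.length) := by
  obtain ⟨f⟩ := (cycleGraph_isContained_iff hc.three_le_length).mpr ⟨x, c, hc, rfl⟩
  refine ⟨(f.isoOfNatCardLE ?_ ?_).symm⟩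
  · simpa using Walk.natCard_le_length_of_forall_mem_support hc.not_nil hspan
  · rw [natCard_edgeSet_cycleGraph hc.three_le_length]
    exact hch.natCard_edgeSet_le hspan

end SimpleGraph

namespace TwoConnected

open SimpleGraph

variable {V : Type*} [Fintype V] {G : SimpleGraph V}

theorem exists_ne_ne (h : TwoConnected G) (x y : V) : ∃ z, z ≠ x ∧ z ≠ y :=
  ENat.exists_ne_ne_of_three_le (by simpa [ENat.card_eq_coe_fintype_card] using h.1) x y

theorem connected (h : TwoConnected G) : G.Connected := by
  have : Nonempty V := Fintype.card_pos_iff.mp (by have := h.1; omega)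
  refine ⟨fun u v => ?_⟩
  obtain ⟨w, hwu, hwv⟩ := h.exists_ne_ne u v
  exact ((h.2 w).preconnected ⟨u, hwu.symm⟩ ⟨v, hwv.symm⟩).map (Embedding.induce _).toHom

theorem exists_adj_ne (h : TwoConnected G) {v a : V} (hva : v ≠ a) : ∃ b, G.Adj v b ∧ b ≠ a := by
  obtain ⟨z, hza, hzv⟩ := h.exists_ne_ne a v
  obtain ⟨p⟩ := (h.2 a).preconnected ⟨v, hva⟩ ⟨z, hza⟩
  have hp : ¬ p.Nil := fun hnil => hzv (congrArg Subtype.val hnil.eq).symm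
  exact ⟨(p.getVert 1).1, p.adj_snd hp, (p.getVert 1).2⟩

theorem one_lt_degree [DecidableRel G.Adj] (h : TwoConnected G) (v : V) : 1 < G.degree v := by
  obtain ⟨a, hav, -⟩ := h.exists_ne_ne v v
  obtain ⟨b, hb, -⟩ := h.exists_adj_ne hav.symm
  obtain ⟨c, hc, hcb⟩ := h.exists_adj_ne hb.ne
  rw [← card_neighborFinset_eq_degree]
  exact Finset.one_lt_card.mpr ⟨b, by simpa using hb, c, by simpa using hc, hcb.symm⟩

theorem not_isAcyclic (h : TwoConnected G) : ¬ G.IsAcyclic := fun hac => by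
  classical
  have : Nontrivial V := Fintype.one_lt_card_iff_nontrivial.mp (by have := h.1; omega)
  obtain ⟨v, hv⟩ := (IsTree.mk h.connected hac).exists_vert_degree_one_of_nontrivial
  exact (h.one_lt_degree v).ne' hv

end TwoConnected

theorem induced_cycle_with_bridge_general {V : Type*} [Fintype V]
    (G : SimpleGraph V)
    (h2 : TwoConnected G)
    (hnc : ¬ ∃ n : ℕ, 3 ≤ n ∧ Nonempty (G ≃g SimpleGraph.cycleGraph n)) :
    ∃ (v : V) (c : G.Walk v v), c.IsCycle ∧ c.toSubgraph.IsInduced ∧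
      ((∃ a b : V, a ∈ c.support ∧ b ∈ c.support ∧ G.Adj a b ∧
          ¬ c.toSubgraph.Adj a b) ∨
        ∃ x : V, x ∉ c.support) := by
  obtain ⟨x, c, hc, hch⟩ := G.exists_isCycle_isChordless h2.not_isAcyclic
  refine ⟨x, c, hc, SimpleGraph.Walk.isInduced_toSubgraph.mpr hch, Or.inr ?_⟩
  by_contra! hspan
  exact hnc ⟨c.length, hc.three_le_length, hc.nonempty_iso_cycleGraph hch hspan⟩

/-- Every 2-connected graph that is not a cycle contains an induced cycle `C`
having at least one bridge (i.e. a chord of `C` or a connected component of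
`G − V(C)`; since `C` is induced, a bridge exists iff there is a chord or a
vertex outside `C`). -/
theorem induced_cycle_with_bridge {V : Type*} [Fintype V] [DecidableEq V]
    (G : SimpleGraph V)
    (h2 : TwoConnected G)
    (hnc : ¬ ∃ n : ℕ, 3 ≤ n ∧ Nonempty (G ≃g SimpleGraph.cycleGraph n)) :
    ∃ (v : V) (c : G.Walk v v), c.IsCycle ∧ c.toSubgraph.IsInduced ∧
      ((∃ a b : V, a ∈ c.support ∧ b ∈ c.support ∧ G.Adj a b ∧
          ¬ c.toSubgraph.Adj a b) ∨
        ∃ x : V, x ∉ c.support) :=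
  induced_cycle_with_bridge_general G h2 hnc
end

section
/- Let C be a cycle of even length 2s in a graph G, let A ⊆ V(C), and suppose that for no index i both u_i ∈ A and u_{i+s+1} ∈ A (indices modulo 2s). If |A| = s, then no two consecutive vertices of C lie in A; consequently the vertices of C alternate between A and V(C)∖A. -/
/-!
Write `c = s + 1`. Translating `A` by `c` lands in the complement of `A`, and both have `s`
elements, so `A + c = Aᶜ`. Translating twice by `c` is translating by `2c = 2`, hence `A + 2 = A`.
A `2`-periodic subset of `ℤ/2s` containing two consecutive residues is everything, which the
cardinality forbids; applied to `Aᶜ = A + c` the same argument rules out two consecutive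
residues outside `A`.
-/

open Finset

theorem Finset.add_mem_iff_notMem_of_two_mul_card_eq {G : Type*} [AddGroup G] [Fintype G]
    [DecidableEq G] {A : Finset G} {c : G} (hA : ∀ x ∈ A, x + c ∉ A)
    (hcard : 2 * #A = Fintype.card G) (x : G) : x + c ∈ A ↔ x ∉ A := by
  have himage : A.image (· + c) = Aᶜ := by
    refine eq_of_subset_of_card_le (fun y hy => ?_) ?_
    · obtain ⟨a, ha, rfl⟩ := mem_image.mp hy
      exact mem_compl.mpr (hA a ha)
    · rw [card_compl, card_image_of_injective _ (add_left_injective c)]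
      omega
  refine ⟨fun hxc hx => hA x hx hxc, fun hx => ?_⟩
  by_contra hxc
  obtain ⟨a, ha, hac⟩ := mem_image.mp (himage ▸ mem_compl.mpr hxc)
  exact hx (add_right_cancel hac ▸ ha)

theorem ZMod.forall_of_add_two {n : ℕ} [NeZero n] {p : ZMod n → Prop}
    (hp : ∀ x, p x → p (x + 2)) {i : ZMod n} (h₀ : p i) (h₁ : p (i + 1)) (x : ZMod n) : p x := by
  have hi : ∀ k : ℕ, p (i + k) := by
    intro k
    induction k using Nat.twoStepInduction with
    | zero => simpa using h₀
    | one => simpa using h₁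
    | more k hk _ => simpa [add_assoc] using hp _ hk
  simpa using hi (x - i).val

/-- Let the vertices of a cycle of even length `2s` be indexed by `ZMod (2s)`,
and let `A` be a set of vertices containing no near-antipodal pair
`{u_i, u_{i+s+1}}`. If `|A| = s`, then no two consecutive vertices lie in `A`;
consequently the vertices alternate between `A` and its complement. -/
theorem alternating_of_no_near_antipodal (s : ℕ) (hs : 0 < s)
    (A : Finset (ZMod (2 * s)))
    (hA : ∀ i : ZMod (2 * s), ¬ (i ∈ A ∧ i + (s : ZMod (2 * s)) + 1 ∈ A))
    (hcard : A.card = s) :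
    (∀ i : ZMod (2 * s), ¬ (i ∈ A ∧ i + 1 ∈ A)) ∧
    (∀ i : ZMod (2 * s), i ∈ A ↔ i + 1 ∉ A) := by
  have : NeZero (2 * s) := ⟨by omega⟩
  have hshift : ∀ x, x + ((s : ZMod (2 * s)) + 1) ∈ A ↔ x ∉ A :=
    Finset.add_mem_iff_notMem_of_two_mul_card_eq
      (fun x hx hxc => hA x ⟨hx, by rwa [add_assoc]⟩) (by rw [hcard, ZMod.card])
  have htwo : (s : ZMod (2 * s)) + 1 + ((s : ZMod (2 * s)) + 1) = 2 := by
    have h := ZMod.natCast_self (2 * s)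
    push_cast at h
    linear_combination h
  have hperiodic : ∀ x, x ∈ A → x + 2 ∈ A := fun x hx => by
    rwa [← htwo, ← add_assoc, hshift, hshift, not_not]
  have hnoconsec : ∀ i : ZMod (2 * s), ¬ (i ∈ A ∧ i + 1 ∈ A) := by
    rintro i ⟨h₀, h₁⟩
    have huniv := eq_univ_of_forall (ZMod.forall_of_add_two hperiodic h₀ h₁)
    rw [huniv, card_univ, ZMod.card] at hcard
    omega
  refine ⟨hnoconsec, fun i => ⟨fun hi hi₁ => hnoconsec i ⟨hi, hi₁⟩, fun hi₁ => ?_⟩⟩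
  by_contra hi
  exact hnoconsec _ ⟨(hshift i).mpr hi, by rw [add_right_comm]; exact (hshift _).mpr hi₁⟩
end
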